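/- Under the Hess–Appel'rot conditions r₂ = 0 and r₁√(a₃−a₂) = ± r₃√(a₂−a₁) with A = diag(a₁,a₂,a₃), a₁ < a₂ < a₃, the function F₄ = r₁m₁ + r₃m₃ has derivative along the Euler–Poisson flow that vanishes on the set {F₄ = 0}; i.e., F₄ = 0 is an invariant relation of the Euler–Poisson equations. -/

import Mathlib

/-!
Since `r ⬝ᵥ (γ ⨯₃ r) = 0`, only the Euler term matters, and for `r₂ = 0` (indices from 1) it factors as
`r ⬝ᵥ (m ⨯₃ Am) = m₂ (r₁ (a₃ - a₂) m₃ + r₃ (a₂ - a₁) m₁)`. Squaring the Hess–Appel'rot condition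
gives `r₁² (a₃ - a₂) = r₃² (a₂ - a₁)`, and with `r₁ m₁ + r₃ m₃ = 0` this makes the bracket vanish.
-/

open Matrix

theorem sq_mul_eq_sq_mul_of_mul_sqrt_eq_or_eq_neg {x y p q : ℝ} (hp : 0 ≤ p) (hq : 0 ≤ q)
    (h : x * √p = y * √q ∨ x * √p = -(y * √q)) : x ^ 2 * p = y ^ 2 * q := by
  have hsq : (x * √p) ^ 2 = (y * √q) ^ 2 := sq_eq_sq_iff_eq_or_eq_neg.mpr h
  rwa [mul_pow, mul_pow, Real.sq_sqrt hp, Real.sq_sqrt hq] at hsq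

theorem dotProduct_cross_mul_of_apply_one_eq_zero {R : Type*} [CommRing R]
    {r : Fin 3 → R} (hr : r 1 = 0) (a m : Fin 3 → R) :
    r ⬝ᵥ (m ⨯₃ fun i => a i * m i) =
      m 1 * (r 0 * (a 2 - a 1) * m 2 + r 2 * (a 1 - a 0) * m 0) := by
  rw [cross_apply, vec3_dotProduct, hr]
  simp only [cons_val_zero, cons_val_one, cons_val_two, head_cons, tail_cons]
  ring

theorem mul_mul_add_mul_mul_eq_zero_of_sq_mul_eq {R : Type*} [CommRing R] [NoZeroDivisors R]
    {x z p q u v : R} (hsq : x ^ 2 * p = z ^ 2 * q) (horth : x * u + z * v = 0) :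
    x * p * v + z * q * u = 0 := by
  by_cases hx : x = 0
  · subst hx
    have hzq : z * q = 0 := by
      rcases mul_eq_zero.mp (by simpa using hsq.symm : z ^ 2 * q = 0) with hz | hq
      · simp [pow_eq_zero_iff two_ne_zero |>.mp hz]
      · simp [hq]
    simp [hzq]
  · -- multiplying by `x` turns the bracket into `z q (x u + z v)`
    refine (mul_eq_zero.mp ?_).resolve_left hx
    linear_combination v * hsq + z * q * horth

/-- Under the Hess–Appel'rot conditions `r₂ = 0`,
`r₁√(a₃−a₂) ± r₃√(a₂−a₁) = 0`, `A = diag(a₁,a₂,a₃)` with `a₁ < a₂ < a₃`,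
the derivative of `F₄ = (r, m)` along the Euler–Poisson flow
`dm/dt = m × Am + GM γ × r` vanishes on the set `{(r, m) = 0}`;
i.e., `F₄ = 0` is an invariant relation of the Euler–Poisson equations. -/
theorem hess_appelrot_invariant_relation
    (a : Fin 3 → ℝ) (ha : a 0 < a 1 ∧ a 1 < a 2)
    (r : Fin 3 → ℝ) (hr2 : r 1 = 0)
    (hHess : r 0 * Real.sqrt (a 2 - a 1) = r 2 * Real.sqrt (a 1 - a 0) ∨
      r 0 * Real.sqrt (a 2 - a 1) = -(r 2 * Real.sqrt (a 1 - a 0)))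
    (GM : ℝ) :
    ∀ m γ : Fin 3 → ℝ, r ⬝ᵥ m = 0 →
      r ⬝ᵥ (crossProduct m (fun i => a i * m i) + GM • crossProduct γ r) = 0 := by
  intro m γ hF₄
  have hsq : r 0 ^ 2 * (a 2 - a 1) = r 2 ^ 2 * (a 1 - a 0) :=
    sq_mul_eq_sq_mul_of_mul_sqrt_eq_or_eq_neg (sub_nonneg.mpr ha.2.le)
      (sub_nonneg.mpr ha.1.le) hHess
  have horth : r 0 * m 0 + r 2 * m 2 = 0 := by
    simpa [vec3_dotProduct, hr2] using hF₄
  rw [dotProduct_add, dotProduct_smul, dot_cross_self, smul_zero, add_zero,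
    dotProduct_cross_mul_of_apply_one_eq_zero hr2]
  exact mul_eq_zero_of_right _ (mul_mul_add_mul_mul_eq_zero_of_sq_mul_eq hsq horth)
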